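/- arXiv:1803.08079 — 9 statements merged into one kernel-verified Lean document; each statement's English description precedes it below -/
import Mathlib

section
/- The square [-1,1]² ⊂ ℝ² equals the projection onto (x,y) of the spectrahedron {(x,y,z) ∈ ℝ³ : the 3×3 symmetric matrix with diagonal entries 1,1,1 and off-diagonal entries x, y, z (i.e. rows (1,x,y),(x,1,z),(y,z,1)) is positive semidefinite}. -/
/-!
Testing a positive semidefinite matrix against `eᵢ ± eⱼ` gives `2 |Aᵢⱼ| ≤ Aᵢᵢ + Aⱼⱼ`, so a unit
diagonal forces `|x|, |y| ≤ 1`. Conversely, for `|x|, |y| ≤ 1` the choice `z = x y` splits the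
matrix as `u uᵀ + diag(0, 1 - x², 1 - y²)` with `u = (1, x, y)`, a sum of positive semidefinite
matrices.
-/

open Matrix

theorem Matrix.PosSemidef.two_mul_abs_apply_le {n R : Type*} [Fintype n] [DecidableEq n]
    [CommRing R] [LinearOrder R] [IsStrictOrderedRing R] [StarRing R] [TrivialStar R]
    {A : Matrix n n R} (hA : A.PosSemidef) (i j : n) : 2 * |A i j| ≤ A i i + A j j := by
  have hsymm : A j i = A i j := by simpa using hA.isHermitian.apply i j
  have hquad (s : R) : 0 ≤ A i i + 2 * s * A i j + s ^ 2 * A j j := by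
    have := hA.dotProduct_mulVec_nonneg (Pi.single i 1 + Pi.single j s)
    simp only [star_trivial, mulVec_add, mulVec_single, MulOpposite.op_one, one_smul,
      op_smul_eq_smul, dotProduct_add, add_dotProduct, single_dotProduct, col_apply, one_mul,
      hsymm, dotProduct_smul, smul_eq_mul] at this
    linear_combination this
  have := hquad 1
  have := hquad (-1)
  rcases abs_cases (A i j) with ⟨h, -⟩ | ⟨h, -⟩ <;> rw [h] <;> linarith

abbrev elliptopeMatrix (x y z : ℝ) : Matrix (Fin 3) (Fin 3) ℝ := !![1, x, y; x, 1, z; y, z, 1]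

theorem elliptopeMatrix_mul_eq (x y : ℝ) :
    elliptopeMatrix x y (x * y) =
      vecMulVec ![1, x, y] ![1, x, y] + diagonal ![0, 1 - x ^ 2, 1 - y ^ 2] := by
  ext i j
  fin_cases i <;> fin_cases j <;> simp [vecMulVec] <;> ring

theorem posSemidef_elliptopeMatrix_mul {x y : ℝ} (hx : |x| ≤ 1) (hy : |y| ≤ 1) :
    (elliptopeMatrix x y (x * y)).PosSemidef := by
  rw [elliptopeMatrix_mul_eq]
  refine (posSemidef_vecMulVec_self_star _).add (PosSemidef.diagonal fun i => ?_)
  fin_cases i <;> simp [sq_le_one_iff_abs_le_one, hx, hy]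

theorem abs_le_one_of_posSemidef_elliptopeMatrix {x y z : ℝ}
    (h : (elliptopeMatrix x y z).PosSemidef) : |x| ≤ 1 ∧ |y| ≤ 1 := by
  have hx := h.two_mul_abs_apply_le 0 1
  have hy := h.two_mul_abs_apply_le 0 2
  simp only [Fin.isValue, of_apply, cons_val', cons_val_one, cons_val_zero, cons_val_fin_one,
    cons_val] at hx hy
  constructor <;> linarith

/-- The square `[-1,1]²` is the projection onto `(x,y)` of the elliptope
`{(x,y,z) : [[1,x,y],[x,1,z],[y,z,1]] ⪰ 0}`. -/
theorem square_eq_proj_elliptope :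
    {p : ℝ × ℝ | -1 ≤ p.1 ∧ p.1 ≤ 1 ∧ -1 ≤ p.2 ∧ p.2 ≤ 1} =
      (fun q : ℝ × ℝ × ℝ => (q.1, q.2.1)) ''
        {q : ℝ × ℝ × ℝ |
          (!![(1 : ℝ), q.1, q.2.1; q.1, 1, q.2.2; q.2.1, q.2.2, 1]).PosSemidef} := by
  ext ⟨x, y⟩
  simp only [Set.mem_ofPred_eq, Set.mem_image, Prod.exists, Prod.mk.injEq]
  constructor
  · rintro ⟨hx₁, hx₂, hy₁, hy₂⟩
    exact ⟨x, y, x * y, posSemidef_elliptopeMatrix_mul (abs_le.2 ⟨hx₁, hx₂⟩) (abs_le.2 ⟨hy₁, hy₂⟩),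
      rfl, rfl⟩
  · rintro ⟨x, y, z, h, rfl, rfl⟩
    obtain ⟨hx, hy⟩ := abs_le_one_of_posSemidef_elliptopeMatrix h
    exact ⟨(abs_le.1 hx).1, (abs_le.1 hx).2, (abs_le.1 hy).1, (abs_le.1 hy).2⟩
end

section
/- Let X be the n×n matrix whose entries are variables x_1,...,x_{n²} written along its rows. The unit ball B = {x ∈ ℝ^{n²} : Σ x_i² ≤ 1} equals the projection onto x of the spectrahedron consisting of pairs (Y, X) such that the 2n×2n block matrix [[Y, X],[Xᵀ, I_n]] is positive semidefinite and trace(Y) = 1. -/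
open Matrix

/-! By the Schur complement, `[[Y, X], [Xᵀ, 1]] ⪰ 0` iff `Y - X Xᵀ ⪰ 0`, and `trace (X Xᵀ)` is the
squared norm `∑ x_ij²`. So a point of the projection has `∑ x_ij² = trace Y - trace (Y - X Xᵀ) ≤ 1`;
conversely, for `∑ x_ij² ≤ 1` the matrix `Y = X Xᵀ + ((1 - ∑ x_ij²) / n) • 1` is a witness. -/

theorem Matrix.trace_mul_transpose_self {m n R : Type*} [Fintype m] [Fintype n] [Semiring R]
    (X : Matrix m n R) : (X * Xᵀ).trace = ∑ i, ∑ j, X i j ^ 2 := by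
  simp only [trace, diag, mul_apply, transpose_apply, sq]

theorem Matrix.posSemidef_fromBlocks_one_iff {m n : Type*} [Fintype m] [Fintype n]
    [DecidableEq n] (Y : Matrix m m ℝ) (X : Matrix m n ℝ) :
    (fromBlocks Y X Xᵀ 1).PosSemidef ↔ (Y - X * Xᵀ).PosSemidef := by
  let _ : Invertible (1 : Matrix n n ℝ) := invertibleOne
  simpa only [conjTranspose_eq_transpose_of_trivial, inv_one, Matrix.mul_one] using
    PosDef.fromBlocks₂₂ Y X PosDef.one

/-- The unit ball in `ℝ^{n²}` (coordinates arranged as an `n × n` matrix `X`) equals the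
projection of the spectrahedron `{(Y,X) : [[Y,X],[Xᵀ,I]] ⪰ 0, trace Y = 1}`. -/
theorem ball_eq_proj_spectrahedron (n : ℕ) (hn : 0 < n) :
    {X : Matrix (Fin n) (Fin n) ℝ | ∑ i, ∑ j, (X i j) ^ 2 ≤ 1} =
      (fun p : Matrix (Fin n) (Fin n) ℝ × Matrix (Fin n) (Fin n) ℝ => p.2) ''
        {p : Matrix (Fin n) (Fin n) ℝ × Matrix (Fin n) (Fin n) ℝ |
          (Matrix.fromBlocks p.1 p.2 p.2ᵀ 1).PosSemidef ∧ p.1.trace = 1} := by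
  ext X
  simp only [Set.mem_ofPred_eq, Set.mem_image, Prod.exists, exists_eq_right,
    posSemidef_fromBlocks_one_iff]
  constructor
  · intro hX
    set c : ℝ := (1 - ∑ i, ∑ j, X i j ^ 2) / n
    refine ⟨X * Xᵀ + c • 1, ?_, ?_⟩
    · rw [add_sub_cancel_left, smul_one_eq_diagonal]
      exact PosSemidef.diagonal fun _ => div_nonneg (sub_nonneg.mpr hX) n.cast_nonneg
    · rw [trace_add, trace_mul_transpose_self, trace_smul, trace_one, Fintype.card_fin,
        smul_eq_mul, div_mul_cancel₀ _ (Nat.cast_ne_zero.mpr hn.ne')]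
      ring
  · rintro ⟨Y, hpsd, htr⟩
    have hgap := hpsd.trace_nonneg
    rw [trace_sub, htr, trace_mul_transpose_self] at hgap
    linarith
end

section
/- If a nonnegative matrix M ∈ ℝ₊^{p×q} admits a factorization M_{ij} = ⟨A_i, B_j⟩ with A_i, B_j ∈ S₊^k (the cone of k×k real symmetric psd matrices, with trace inner product), then rank(M) ≤ k(k+1)/2. Equivalently, if rank_psd(M) = k then rank(M) ≤ k(k+1)/2, i.e. rank_psd(M) ≥ (√(1+8·rank(M)) − 1)/2. -/
/-!
Symmetric `k × k` matrices form a space of dimension `k(k+1)/2`: for symmetric `A`, `B`,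
`tr(AB) = ∑_{a ≤ b} w_{ab} A_{ab} B_{ab}` with `w = 1` on the diagonal and `w = 2` off it.
Hence `M_{ij} = tr(A_i B_j)` factors as `M = P Q` through the index set `{(a, b) | a ≤ b}`,
and `rank M ≤ rank P ≤ k(k+1)/2`.
-/

open Matrix Finset

section SymmetricPairs

variable {ι : Type*} [Fintype ι] [LinearOrder ι]

theorem Fintype.card_subtype_fst_le_snd :
    Fintype.card {x : ι × ι // x.1 ≤ x.2} = Fintype.card ι * (Fintype.card ι + 1) / 2 := by
  rw [← Fintype.card_congr Sym2.sortEquiv, Sym2.card, Nat.choose_two_right, Nat.add_sub_cancel,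
    Nat.mul_comm]

theorem Fintype.sum_sum_eq_sum_fst_le_snd {R : Type*} [AddCommMonoid R] (f : ι → ι → R)
    (hf : ∀ a b, f a b = f b a) :
    ∑ a, ∑ b, f a b =
      ∑ x : {x : ι × ι // x.1 ≤ x.2}, (if x.1.1 = x.1.2 then 1 else 2 : ℕ) • f x.1.1 x.1.2 := by
  have hswap : ∑ x : ι × ι with ¬x.1 ≤ x.2, f x.1 x.2 = ∑ x : ι × ι with x.1 < x.2, f x.1 x.2 :=
    sum_nbij' Prod.swap Prod.swap (by simp) (by simp) (by simp) (by simp) fun x _ => hf _ _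
  have hweight : ∀ x : {x : ι × ι // x.1 ≤ x.2},
      (if x.1.1 = x.1.2 then 1 else 2 : ℕ) • f x.1.1 x.1.2 =
        f x.1.1 x.1.2 + if x.1.1 < x.1.2 then f x.1.1 x.1.2 else 0 := by
    rintro ⟨⟨a, b⟩, hab : a ≤ b⟩
    rcases hab.lt_or_eq with h | rfl
    · simp [h.ne, h, two_nsmul]
    · simp
  rw [Fintype.sum_congr _ _ hweight, sum_add_distrib, ← Fintype.sum_prod_type',
    ← sum_filter_add_sum_filter_not univ (fun x : ι × ι => x.1 ≤ x.2), ← sum_subtype_eq_sum_filter]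
  have hlt : ∑ x : {x : ι × ι // ¬x.1 ≤ x.2}, (if x.1.1 < x.1.2 then f x.1.1 x.1.2 else 0) = 0 :=
    Finset.sum_eq_zero fun x _ => if_neg fun h => x.2 h.le
  rw [subtype_univ, hswap, sum_filter,
    ← Fintype.sum_subtype_add_sum_subtype (fun x : ι × ι => x.1 ≤ x.2), hlt, add_zero]

theorem Matrix.trace_mul_eq_sum_fst_le_snd {R : Type*} [Semiring R] {X Y : Matrix ι ι R}
    (hX : X.IsSymm) (hY : Y.IsSymm) :
    (X * Y).trace =
      ∑ x : {x : ι × ι // x.1 ≤ x.2},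
        (if x.1.1 = x.1.2 then 1 else 2 : ℕ) • (X x.1.1 x.1.2 * Y x.1.1 x.1.2) := by
  have htrace : (X * Y).trace = ∑ a, ∑ b, X a b * Y a b := by
    simp only [trace, diag, mul_apply, hY.apply]
  rw [htrace, Fintype.sum_sum_eq_sum_fst_le_snd _ fun a b => by rw [hX.apply, hY.apply]]

theorem Matrix.rank_le_of_forall_trace_mul_eq {m n R : Type*} [Fintype n] [CommSemiring R]
    [StrongRankCondition R] (M : Matrix m n R) (A : m → Matrix ι ι R) (B : n → Matrix ι ι R)
    (hA : ∀ i, (A i).IsSymm) (hB : ∀ j, (B j).IsSymm) (hM : ∀ i j, (A i * B j).trace = M i j) :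
    M.rank ≤ Fintype.card ι * (Fintype.card ι + 1) / 2 := by
  let P : Matrix m {x : ι × ι // x.1 ≤ x.2} R :=
    of fun i x => (if x.1.1 = x.1.2 then 1 else 2 : ℕ) • A i x.1.1 x.1.2
  let Q : Matrix {x : ι × ι // x.1 ≤ x.2} n R := of fun x j => B j x.1.1 x.1.2
  have hPQ : M = P * Q := by
    ext i j
    simp only [← hM, trace_mul_eq_sum_fst_le_snd (hA i) (hB j), mul_apply, P, Q, of_apply,
      smul_mul_assoc]
  calc M.rank ≤ P.rank := hPQ ▸ rank_mul_le_left P Q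
    _ ≤ Fintype.card {x : ι × ι // x.1 ≤ x.2} := rank_le_card_width P
    _ = Fintype.card ι * (Fintype.card ι + 1) / 2 := Fintype.card_subtype_fst_le_snd

end SymmetricPairs

theorem rank_le_of_psd_factorization_general (p q k : ℕ) (M : Matrix (Fin p) (Fin q) ℝ)
    (A : Fin p → Matrix (Fin k) (Fin k) ℝ) (B : Fin q → Matrix (Fin k) (Fin k) ℝ)
    (hA : ∀ i, (A i).PosSemidef) (hB : ∀ j, (B j).PosSemidef)
    (hfact : ∀ i j, (A i * B j).trace = M i j) :
    M.rank ≤ k * (k + 1) / 2 := by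
  simpa using M.rank_le_of_forall_trace_mul_eq A B
    (fun i => isHermitian_iff_isSymm.mp (hA i).isHermitian)
    (fun j => isHermitian_iff_isSymm.mp (hB j).isHermitian) hfact

/-- If a nonnegative matrix admits a psd factorization of size `k`, then its rank is at
most `k(k+1)/2`. -/
theorem rank_le_of_psd_factorization (p q k : ℕ) (M : Matrix (Fin p) (Fin q) ℝ)
    (hM : ∀ i j, 0 ≤ M i j)
    (A : Fin p → Matrix (Fin k) (Fin k) ℝ) (B : Fin q → Matrix (Fin k) (Fin k) ℝ)
    (hA : ∀ i, (A i).PosSemidef) (hB : ∀ j, (B j).PosSemidef)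
    (hfact : ∀ i j, (A i * B j).trace = M i j) :
    M.rank ≤ k * (k + 1) / 2 :=
  rank_le_of_psd_factorization_general p q k M A B hA hB hfact
end

section
/- Let M ∈ ℝ₊^{p×q} have psd rank k, and let M' be the (p+1)×(q+1) matrix [[M, 0],[w, α]] where w ∈ ℝ₊^q is a nonnegative row vector, α > 0, and 0 denotes a zero column. Then rank_psd(M') = k + 1. -/
open Matrix

/-- The psd rank of a nonnegative matrix: the smallest `k` admitting a factorization
`M i j = trace (A i * B j)` with `A i, B j` psd matrices of size `k`. -/
noncomputable def psdRank {p q : ℕ} (M : Matrix (Fin p) (Fin q) ℝ) : ℕ :=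
  sInf {k : ℕ |
    ∃ (A : Fin p → Matrix (Fin k) (Fin k) ℝ) (B : Fin q → Matrix (Fin k) (Fin k) ℝ),
      (∀ i, (A i).PosSemidef) ∧ (∀ j, (B j).PosSemidef) ∧
        ∀ i j, (A i * B j).trace = M i j}

/-! Adding `diag(0, α)` and `diag(B j, w j / α)` to a factorization of `M` of size `k` gives one
of `M'` of size `k + 1`. Conversely, in a factorization `(A, B)` of `M'`, `B last ≠ 0` because
`trace (A last * B last) = α > 0`, while `trace (A i * B last) = 0` for the old rows forces
`A i * B last = 0` (both are psd). So a nonzero column `v` of `B last` lies in the kernel of every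
old `A i`. After a change of basis sending `v` to a coordinate vector `e a`
(`A i ↦ Uᴴ A i U`, `B j ↦ U⁻¹ B j U⁻ᴴ`, which preserves psd-ness and traces), row and column `a`
of every old `A i` vanish, and deleting them gives a factorization of `M` of size one less. -/

namespace Matrix

open scoped ComplexOrder MatrixOrder

variable {𝕜 : Type*} [RCLike 𝕜] {ι κ : Type*} [Fintype ι] [Fintype κ]

theorem PosSemidef.mul_eq_zero_of_trace_mul_eq_zero {A B : Matrix ι ι 𝕜}
    (hA : A.PosSemidef) (hB : B.PosSemidef) (h : (A * B).trace = 0) : A * B = 0 := by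
  classical
  obtain ⟨S, rfl⟩ := CStarAlgebra.nonneg_iff_eq_star_mul_self.mp hA.nonneg
  obtain ⟨T, rfl⟩ := CStarAlgebra.nonneg_iff_eq_star_mul_self.mp hB.nonneg
  have hTS : T * Sᴴ = 0 := by
    rw [← trace_conjTranspose_mul_self_eq_zero_iff, ← h]
    calc ((T * Sᴴ)ᴴ * (T * Sᴴ)).trace = (S * (Tᴴ * T * Sᴴ)).trace := by
          simp only [conjTranspose_mul, conjTranspose_conjTranspose, Matrix.mul_assoc]
      _ = (Tᴴ * T * (Sᴴ * S)).trace := by rw [trace_mul_comm, Matrix.mul_assoc]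
      _ = (star S * S * (star T * T)).trace := trace_mul_comm _ _
  calc star S * S * (star T * T) = star S * (T * Sᴴ)ᴴ * T := by
        simp only [conjTranspose_mul, conjTranspose_conjTranspose, star_eq_conjTranspose,
          Matrix.mul_assoc]
    _ = 0 := by rw [hTS, conjTranspose_zero, Matrix.mul_zero, Matrix.zero_mul]

theorem PosSemidef.fromBlocks_zero {A : Matrix ι ι 𝕜} {D : Matrix κ κ 𝕜}
    (hA : A.PosSemidef) (hD : D.PosSemidef) : (fromBlocks A 0 0 D).PosSemidef := by
  classical
  obtain ⟨S, rfl⟩ := CStarAlgebra.nonneg_iff_eq_star_mul_self.mp hA.nonneg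
  obtain ⟨T, rfl⟩ := CStarAlgebra.nonneg_iff_eq_star_mul_self.mp hD.nonneg
  convert posSemidef_conjTranspose_mul_self (fromBlocks S 0 0 T) using 1
  simp [fromBlocks_conjTranspose, fromBlocks_multiply, star_eq_conjTranspose]

theorem trace_fromBlocks_zero_mul {R : Type*} [Semiring R]
    (A B : Matrix ι ι R) (C D : Matrix κ κ R) :
    (fromBlocks A 0 0 C * fromBlocks B 0 0 D).trace = (A * B).trace + (C * D).trace := by
  simp [fromBlocks_multiply, trace, Fintype.sum_sum_type]

def extendDiag (X : Matrix ι ι 𝕜) (c : 𝕜) : Matrix (ι ⊕ Unit) (ι ⊕ Unit) 𝕜 :=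
  fromBlocks X 0 0 (diagonal fun _ => c)

theorem PosSemidef.extendDiag {X : Matrix ι ι 𝕜} (hX : X.PosSemidef) {c : 𝕜} (hc : 0 ≤ c) :
    (extendDiag X c).PosSemidef :=
  hX.fromBlocks_zero (PosSemidef.diagonal fun _ => hc)

theorem trace_extendDiag_mul_extendDiag (X Y : Matrix ι ι 𝕜) (c d : 𝕜) :
    (extendDiag X c * extendDiag Y d).trace = (X * Y).trace + c * d := by
  simp [extendDiag, trace_fromBlocks_zero_mul]

theorem trace_submatrix_ne_mul_submatrix_ne {R : Type*} [NonUnitalNonAssocSemiring R]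
    [DecidableEq ι] (A B : Matrix ι ι R) (a : ι) (hrow : ∀ b, A a b = 0) (hcol : ∀ b, A b a = 0) :
    (A.submatrix (↑) (↑) * B.submatrix (↑) (↑) : Matrix {b // b ≠ a} {b // b ≠ a} R).trace =
      (A * B).trace := by
  simp only [trace, diag, mul_apply]
  rw [Fintype.sum_eq_add_sum_subtype_ne _ a]
  simp only [hrow, zero_mul, Finset.sum_const_zero, zero_add]
  refine Finset.sum_congr rfl fun b _ => ?_
  rw [Fintype.sum_eq_add_sum_subtype_ne _ a, hcol, zero_mul, zero_add]
  rfl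

theorem exists_isUnit_det_col_eq {K : Type*} [Field K] [DecidableEq ι] {v : ι → K} {a : ι}
    (hv : v a ≠ 0) : ∃ U : Matrix ι ι K, IsUnit U.det ∧ U *ᵥ Pi.single a 1 = v := by
  let e : ι → K := Pi.single a 1
  refine ⟨1 + replicateCol Unit (v - e) * replicateRow Unit e, ?_, ?_⟩
  · rw [det_one_add_replicateCol_mul_replicateRow]
    simpa [e] using hv
  · ext b
    by_cases hb : b = a <;> simp [e, mul_apply, hb]

theorem trace_conj_mul_conj {R : Type*} [CommSemiring R] [StarRing R] [DecidableEq ι]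
    {U V : Matrix ι ι R} (hUV : U * V = 1) (A B : Matrix ι ι R) :
    ((Uᴴ * A * U) * (V * B * Vᴴ)).trace = (A * B).trace := by
  calc ((Uᴴ * A * U) * (V * B * Vᴴ)).trace = (Uᴴ * (A * B * Vᴴ)).trace := by
        simp only [Matrix.mul_assoc, ← Matrix.mul_assoc U V, hUV, Matrix.one_mul]
    _ = (A * B * (U * V)ᴴ).trace := by
        rw [trace_mul_comm, conjTranspose_mul, Matrix.mul_assoc]
    _ = (A * B).trace := by rw [hUV, conjTranspose_one, Matrix.mul_one]

end Matrix

def HasPsdFactorization {m n : Type*} (M : Matrix m n ℝ) (ι : Type*) [Fintype ι] : Prop :=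
  ∃ (A : m → Matrix ι ι ℝ) (B : n → Matrix ι ι ℝ),
    (∀ i, (A i).PosSemidef) ∧ (∀ j, (B j).PosSemidef) ∧ ∀ i j, (A i * B j).trace = M i j

section

variable {m n ι κ : Type*} [Fintype ι] [Fintype κ] {M : Matrix m n ℝ}

theorem HasPsdFactorization.reindex (h : HasPsdFactorization M ι) (e : ι ≃ κ) :
    HasPsdFactorization M κ := by
  obtain ⟨A, B, hA, hB, hAB⟩ := h
  refine ⟨fun i => (A i).submatrix e.symm e.symm, fun j => (B j).submatrix e.symm e.symm,
    fun i => (hA i).submatrix _, fun j => (hB j).submatrix _, fun i j => ?_⟩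
  rw [← hAB, submatrix_mul_equiv]
  exact e.symm.sum_comp fun a => (A i * B j) a a

theorem hasPsdFactorization_of_nonneg [Fintype n] [DecidableEq n] (hM : ∀ i j, 0 ≤ M i j) :
    HasPsdFactorization M n := by
  refine ⟨fun i => diagonal (M i), fun j => diagonal (Pi.single j 1),
    fun i => PosSemidef.diagonal (hM i), fun j => PosSemidef.diagonal fun b => ?_, fun i j => ?_⟩
  · by_cases hb : b = j <;> simp [hb]
  · simp [diagonal_mul_diagonal, Pi.single_apply]

variable {p q : ℕ}

theorem psdRank_le_card {M : Matrix (Fin p) (Fin q) ℝ} (h : HasPsdFactorization M ι) :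
    psdRank M ≤ Fintype.card ι :=
  Nat.sInf_le (h.reindex (Fintype.equivFin ι))

theorem HasPsdFactorization.fin_psdRank {M : Matrix (Fin p) (Fin q) ℝ}
    (h : HasPsdFactorization M ι) : HasPsdFactorization M (Fin (psdRank M)) :=
  Nat.sInf_mem (s := {k | HasPsdFactorization M (Fin k)}) ⟨_, h.reindex (Fintype.equivFin ι)⟩

theorem hasPsdFactorization_subtype_ne [DecidableEq ι] {A : m → Matrix ι ι ℝ}
    {B : n → Matrix ι ι ℝ} (hA : ∀ i, (A i).PosSemidef) (hB : ∀ j, (B j).PosSemidef)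
    {v : ι → ℝ} {a : ι} (hva : v a ≠ 0) (hAv : ∀ i, A i *ᵥ v = 0) :
    HasPsdFactorization (of fun i j => (A i * B j).trace) {b // b ≠ a} := by
  obtain ⟨U, hU, hUa⟩ := exists_isUnit_det_col_eq hva
  let A' i := Uᴴ * A i * U
  have hA' i : (A' i).PosSemidef := (hA i).conjTranspose_mul_mul_same U
  have hA'col i b : A' i b a = 0 := by
    have : A' i *ᵥ Pi.single a 1 = 0 := by
      rw [← mulVec_mulVec, ← mulVec_mulVec, hUa, hAv, mulVec_zero]
    simpa using congrFun this b
  have hA'row i b : A' i a b = 0 := by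
    simpa [hA'col] using (hA' i).isHermitian.apply b a
  refine ⟨fun i => (A' i).submatrix (↑) (↑), fun j => (U⁻¹ * B j * U⁻¹ᴴ).submatrix (↑) (↑),
    fun i => (hA' i).submatrix _, fun j => ((hB j).mul_mul_conjTranspose_same _).submatrix _,
    fun i j => ?_⟩
  rw [trace_submatrix_ne_mul_submatrix_ne _ _ a (hA'row i) (hA'col i),
    trace_conj_mul_conj (mul_nonsing_inv U hU)]
  rfl

theorem HasPsdFactorization.border {M : Matrix (Fin p) (Fin q) ℝ}
    {M' : Matrix (Fin (p + 1)) (Fin (q + 1)) ℝ} {w : Fin q → ℝ} {α : ℝ}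
    (h : HasPsdFactorization M ι) (hw : ∀ j, 0 ≤ w j) (hα : 0 < α)
    (h₁ : ∀ (i : Fin p) (j : Fin q), M' i.castSucc j.castSucc = M i j)
    (h₂ : ∀ i : Fin p, M' i.castSucc (Fin.last q) = 0)
    (h₃ : ∀ j : Fin q, M' (Fin.last p) j.castSucc = w j)
    (h₄ : M' (Fin.last p) (Fin.last q) = α) :
    HasPsdFactorization M' (ι ⊕ Unit) := by
  obtain ⟨A, B, hA, hB, hAB⟩ := h
  refine ⟨Fin.lastCases (extendDiag 0 α) fun i => extendDiag (A i) 0,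
    Fin.lastCases (extendDiag 0 1) fun j => extendDiag (B j) (w j / α), ?_, ?_, ?_⟩
  · refine Fin.lastCases ?_ fun i => ?_
    · simpa using PosSemidef.zero.extendDiag hα.le
    · simpa using (hA i).extendDiag le_rfl
  · refine Fin.lastCases ?_ fun j => ?_
    · simpa using PosSemidef.zero.extendDiag zero_le_one
    · simpa using (hB j).extendDiag (div_nonneg (hw j) hα.le)
  · intro i j
    induction i using Fin.lastCases <;> induction j using Fin.lastCases <;>
      simp [trace_extendDiag_mul_extendDiag, h₁, h₂, h₃, h₄, hAB, mul_div_cancel₀ _ hα.ne']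

theorem psdRank_add_one_le_card {M : Matrix (Fin p) (Fin q) ℝ}
    {M' : Matrix (Fin (p + 1)) (Fin (q + 1)) ℝ} {α : ℝ} (h : HasPsdFactorization M' ι)
    (hα : α ≠ 0) (h₁ : ∀ (i : Fin p) (j : Fin q), M' i.castSucc j.castSucc = M i j)
    (h₂ : ∀ i : Fin p, M' i.castSucc (Fin.last q) = 0) (h₄ : M' (Fin.last p) (Fin.last q) = α) :
    psdRank M + 1 ≤ Fintype.card ι := by
  classical
  obtain ⟨A, B, hA, hB, hAB⟩ := h
  obtain ⟨a, c, hac⟩ : ∃ a c, B (Fin.last q) a c ≠ 0 := by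
    by_contra! h0
    apply hα
    rw [← h₄, ← hAB, show B (Fin.last q) = 0 from Matrix.ext h0, Matrix.mul_zero, trace_zero]
  have hAv (i : Fin p) : A i.castSucc *ᵥ (B (Fin.last q)).col c = 0 := by
    have := (hA i.castSucc).mul_eq_zero_of_trace_mul_eq_zero (hB (Fin.last q))
      (by rw [hAB, h₂])
    rw [← mulVec_single_one, mulVec_mulVec, this, zero_mulVec]
  have hM := hasPsdFactorization_subtype_ne (fun i : Fin p => hA i.castSucc)
    (fun j : Fin q => hB j.castSucc) (v := (B (Fin.last q)).col c) hac hAv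
  rw [show (of fun i j => (A i.castSucc * B j.castSucc).trace) = M by ext; simp [hAB, h₁]] at hM
  have hcard := psdRank_le_card hM
  have hpos : 0 < Fintype.card ι := Fintype.card_pos_iff.mpr ⟨a⟩
  simp only [ne_eq, Fintype.card_subtype_compl, Fintype.card_unique] at hcard
  omega

end

/-- Extending `M` by a zero column and a new row `(w, α)` with `α > 0` increases the
psd rank by exactly one. -/
theorem psdRank_extend (p q k : ℕ) (M : Matrix (Fin p) (Fin q) ℝ)
    (hM : ∀ i j, 0 ≤ M i j) (hk : psdRank M = k)
    (w : Fin q → ℝ) (hw : ∀ j, 0 ≤ w j) (α : ℝ) (hα : 0 < α)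
    (M' : Matrix (Fin (p + 1)) (Fin (q + 1)) ℝ)
    (h₁ : ∀ (i : Fin p) (j : Fin q), M' i.castSucc j.castSucc = M i j)
    (h₂ : ∀ i : Fin p, M' i.castSucc (Fin.last q) = 0)
    (h₃ : ∀ j : Fin q, M' (Fin.last p) j.castSucc = w j)
    (h₄ : M' (Fin.last p) (Fin.last q) = α) :
    psdRank M' = k + 1 := by
  subst hk
  have hM' := (hasPsdFactorization_of_nonneg hM).fin_psdRank.border hw hα h₁ h₂ h₃ h₄
  refine le_antisymm ?_ ?_
  · simpa using psdRank_le_card hM'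
  · simpa using psdRank_add_one_le_card hM'.fin_psdRank hα.ne' h₁ h₂ h₄
end

section
/- In the setting of the previous extension: if M' = [[M,0],[w,α]] with rank_psd(M) = k admits a S₊^{k+1}-factorization A_1,...,A_{p+1}, B_1,...,B_{q+1}, then the factor B_{q+1} associated to the last column has rank one. -/
open Matrix

/-!
Since `trace (A i * B) = 0` for psd matrices forces `A i * B = 0`, the factors `A i` of the rows
of `M` all map into `ker B`, where `B` is the factor of the last column; `B ≠ 0` because of the
entry `α > 0`. A psd factorization whose left factors map into a subspace `N` can be compressed to
one of size `dim N`: if `V * W` is a projection onto `N`, take `W * A i * Wᴴ` and `Vᴴ * B j * V`.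
Hence `k = psdRank M ≤ dim ker B = k + 1 - rank B`, so `rank B ≤ 1`.
-/

theorem Submodule.exists_mul_mul_eq_self_of_mulVec_mem {K n m : Type*} [Field K]
    [Fintype n] [Fintype m] (N : Submodule K (n → K)) :
    ∃ (V : Matrix n (Fin (Module.finrank K N)) K) (W : Matrix (Fin (Module.finrank K N)) n K),
      ∀ X : Matrix n m K, (∀ x, X *ᵥ x ∈ N) → V * W * X = X := by
  classical
  obtain ⟨N', hN'⟩ := N.exists_isCompl
  let b := Module.finBasis K N
  refine ⟨LinearMap.toMatrix' (N.subtype ∘ₗ b.equivFun.symm.toLinearMap),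
    LinearMap.toMatrix' (b.equivFun.toLinearMap ∘ₗ N.projectionOnto N' hN'), fun X hX ↦ ?_⟩
  refine ext_of_mulVec_single fun j ↦ ?_
  rw [← mulVec_mulVec, ← mulVec_mulVec, LinearMap.toMatrix'_mulVec, LinearMap.toMatrix'_mulVec]
  simp [Submodule.projectionOnto_apply_left hN' ⟨_, by simpa using hX (Pi.single j 1)⟩]

namespace Matrix

theorem rank_eq_zero_iff {m n K : Type*} [Fintype n] [Field K] {A : Matrix m n K} :
    A.rank = 0 ↔ A = 0 := by
  classical
  rw [rank, Submodule.finrank_eq_zero, LinearMap.range_eq_bot, ← toLin'_apply',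
    LinearEquiv.map_eq_zero_iff]

open scoped ComplexOrder MatrixOrder in
theorem PosSemidef.mul_eq_zero_of_trace_mul_eq_zero_s10 {n 𝕜 : Type*} [Fintype n]
    [RCLike 𝕜] {X Y : Matrix n n 𝕜} (hX : X.PosSemidef) (hY : Y.PosSemidef)
    (h : (X * Y).trace = 0) : X * Y = 0 := by
  classical
  obtain ⟨P, rfl⟩ := CStarAlgebra.nonneg_iff_eq_star_mul_self.mp hX.nonneg
  obtain ⟨Q, rfl⟩ := CStarAlgebra.nonneg_iff_eq_star_mul_self.mp hY.nonneg
  rw [star_eq_conjTranspose, star_eq_conjTranspose] at h ⊢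
  have hQP : Q * Pᴴ = 0 := by
    rw [← trace_conjTranspose_mul_self_eq_zero_iff, conjTranspose_mul, conjTranspose_conjTranspose]
    calc (P * Qᴴ * (Q * Pᴴ)).trace = (Qᴴ * Q * Pᴴ * P).trace := by
          simp only [Matrix.mul_assoc, trace_mul_comm P]
      _ = (Pᴴ * P * (Qᴴ * Q)).trace := by rw [Matrix.mul_assoc, trace_mul_comm]
      _ = 0 := h
  rw [Matrix.mul_assoc, ← Matrix.mul_assoc P, ← conjTranspose_conjTranspose (P * Qᴴ),
    conjTranspose_mul, conjTranspose_conjTranspose, hQP]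
  simp

end Matrix

theorem psdRank_le_finrank_of_mulVec_mem {p q : ℕ} {ι : Type*} [Fintype ι]
    {M : Matrix (Fin p) (Fin q) ℝ} {A : Fin p → Matrix ι ι ℝ} {B : Fin q → Matrix ι ι ℝ}
    (hA : ∀ i, (A i).PosSemidef) (hB : ∀ j, (B j).PosSemidef)
    (hAB : ∀ i j, (A i * B j).trace = M i j) (N : Submodule ℝ (ι → ℝ))
    (hN : ∀ i x, A i *ᵥ x ∈ N) : psdRank M ≤ Module.finrank ℝ N := by
  obtain ⟨V, W, hVW⟩ := N.exists_mul_mul_eq_self_of_mulVec_mem (m := ι)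
  refine Nat.sInf_le ⟨fun i ↦ W * A i * Wᴴ, fun j ↦ Vᴴ * B j * V,
    fun i ↦ (hA i).mul_mul_conjTranspose_same W, fun j ↦ (hB j).conjTranspose_mul_mul_same V,
    fun i j ↦ ?_⟩
  have hPA : V * W * A i = A i := hVW (A i) (hN i)
  have hAP : A i * (V * W)ᴴ = A i := by
    simpa only [conjTranspose_mul, (hA i).isHermitian.eq] using congrArg conjTranspose hPA
  calc (W * A i * Wᴴ * (Vᴴ * B j * V)).trace = (A i * (V * W)ᴴ * B j * V * W).trace := by
        simp only [conjTranspose_mul, Matrix.mul_assoc]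
        rw [trace_mul_comm W]
        simp only [Matrix.mul_assoc]
    _ = (V * W * A i * B j).trace := by
        rw [hAP, Matrix.mul_assoc (A i * B j), trace_mul_comm, ← Matrix.mul_assoc]
    _ = M i j := by rw [hPA, hAB]

theorem last_factor_rank_one_general (p q k : ℕ) (M : Matrix (Fin p) (Fin q) ℝ)
    (hk : psdRank M = k) (α : ℝ) (hα : 0 < α)
    (M' : Matrix (Fin (p + 1)) (Fin (q + 1)) ℝ)
    (h₁ : ∀ (i : Fin p) (j : Fin q), M' i.castSucc j.castSucc = M i j)
    (h₂ : ∀ i : Fin p, M' i.castSucc (Fin.last q) = 0)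
    (h₄ : M' (Fin.last p) (Fin.last q) = α)
    (A : Fin (p + 1) → Matrix (Fin (k + 1)) (Fin (k + 1)) ℝ)
    (B : Fin (q + 1) → Matrix (Fin (k + 1)) (Fin (k + 1)) ℝ)
    (hA : ∀ i, (A i).PosSemidef) (hB : ∀ j, (B j).PosSemidef)
    (hfact : ∀ i j, (A i * B j).trace = M' i j) :
    (B (Fin.last q)).rank = 1 := by
  have hlast := hfact (Fin.last p) (Fin.last q)
  rw [h₄] at hlast
  set b := B (Fin.last q)
  have hb : b ≠ 0 := by
    intro hb
    rw [hb, Matrix.mul_zero, trace_zero] at hlast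
    exact hα.ne hlast
  have hbA : ∀ i : Fin p, b * A i.castSucc = 0 := fun i ↦
    (hB _).mul_eq_zero_of_trace_mul_eq_zero_s10 (hA _) (by rw [trace_mul_comm, hfact, h₂])
  have hker : psdRank M ≤ Module.finrank ℝ (LinearMap.ker b.mulVecLin) :=
    psdRank_le_finrank_of_mulVec_mem (fun i ↦ hA _) (fun j ↦ hB _)
      (fun i j ↦ by rw [hfact, h₁]) _ fun i x ↦ by simp [mulVec_mulVec, hbA i]
  have hdim : b.rank + Module.finrank ℝ (LinearMap.ker b.mulVecLin) = k + 1 := by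
    rw [rank, b.mulVecLin.finrank_range_add_finrank_ker, Module.finrank_fin_fun]
  have hrank : b.rank ≠ 0 := Matrix.rank_eq_zero_iff.not.mpr hb
  omega

/-- In a size-`(k+1)` psd factorization of the extended matrix `M' = [[M,0],[w,α]]`
(where `psdRank M = k`), the factor associated to the last column has rank one. -/
theorem last_factor_rank_one (p q k : ℕ) (M : Matrix (Fin p) (Fin q) ℝ)
    (hM : ∀ i j, 0 ≤ M i j) (hk : psdRank M = k)
    (w : Fin q → ℝ) (hw : ∀ j, 0 ≤ w j) (α : ℝ) (hα : 0 < α)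
    (M' : Matrix (Fin (p + 1)) (Fin (q + 1)) ℝ)
    (h₁ : ∀ (i : Fin p) (j : Fin q), M' i.castSucc j.castSucc = M i j)
    (h₂ : ∀ i : Fin p, M' i.castSucc (Fin.last q) = 0)
    (h₃ : ∀ j : Fin q, M' (Fin.last p) j.castSucc = w j)
    (h₄ : M' (Fin.last p) (Fin.last q) = α)
    (A : Fin (p + 1) → Matrix (Fin (k + 1)) (Fin (k + 1)) ℝ)
    (B : Fin (q + 1) → Matrix (Fin (k + 1)) (Fin (k + 1)) ℝ)
    (hA : ∀ i, (A i).PosSemidef) (hB : ∀ j, (B j).PosSemidef)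
    (hfact : ∀ i j, (A i * B j).trace = M' i j) :
    (B (Fin.last q)).rank = 1 :=
  last_factor_rank_one_general p q k M hk α hα M' h₁ h₂ h₄ A B hA hB hfact
end

section
/- If M ∈ ℝ₊^{p×q} is a nonnegative matrix and there exists a matrix N with N_{ij}² = M_{ij} for all i,j and rank(N) = r, then rank_psd(M) ≤ r. -/
/-!
Factor `N = C * D` through its rank `r`, so `N i j = cᵢ ⬝ᵥ dⱼ` with `cᵢ, dⱼ ∈ ℝʳ`. Then
`M i j = (cᵢ ⬝ᵥ dⱼ)² = tr((cᵢ cᵢᵀ)(dⱼ dⱼᵀ))`, a factorization by rank-one psd `r × r` matrices.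
-/

open Matrix

namespace Matrix

theorem exists_rank_factorization {K m n : Type*} [Field K] [Fintype n] (N : Matrix m n K) :
    ∃ (C : Matrix m (Fin N.rank) K) (D : Matrix (Fin N.rank) n K), C * D = N := by
  classical
  let b := Module.finBasisOfFinrankEq K (LinearMap.range N.mulVecLin) rfl
  have hcol (j : n) : N.col j ∈ LinearMap.range N.mulVecLin :=
    ⟨Pi.single j 1, mulVec_single_one N j⟩
  refine ⟨of fun i k => (b k : m → K) i, of fun k j => b.repr ⟨N.col j, hcol j⟩ k, ?_⟩
  ext i j
  have h := congrArg (fun w : LinearMap.range N.mulVecLin => (w : m → K) i)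
    (b.sum_repr ⟨N.col j, hcol j⟩)
  simp only [Submodule.coe_sum, Submodule.coe_smul, Finset.sum_apply, Pi.smul_apply,
    smul_eq_mul, col_apply] at h
  rw [← h, mul_apply]
  exact Finset.sum_congr rfl fun k _ => mul_comm _ _

theorem trace_vecMulVec_self_mul_vecMulVec_self {R n : Type*} [Fintype n] [CommSemiring R]
    (u v : n → R) : (vecMulVec u u * vecMulVec v v).trace = (u ⬝ᵥ v) ^ 2 := by
  rw [vecMulVec_mul_vecMulVec, trace_vecMulVec, dotProduct_smul, smul_eq_mul, sq]

theorem posSemidef_vecMulVec_self {R n : Type*} [Finite n] [Ring R] [PartialOrder R] [StarRing R]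
    [StarOrderedRing R] [TrivialStar R] (u : n → R) : (vecMulVec u u).PosSemidef := by
  simpa using posSemidef_vecMulVec_self_star u

end Matrix

theorem psdRank_le_of_sq_mul_eq {p q k : ℕ} (M : Matrix (Fin p) (Fin q) ℝ)
    (C : Matrix (Fin p) (Fin k) ℝ) (D : Matrix (Fin k) (Fin q) ℝ)
    (hM : ∀ i j, (C * D) i j ^ 2 = M i j) : psdRank M ≤ k := by
  refine Nat.sInf_le ⟨fun i => vecMulVec (C i) (C i), fun j => vecMulVec (Dᵀ j) (Dᵀ j),
    fun i => posSemidef_vecMulVec_self _, fun j => posSemidef_vecMulVec_self _, fun i j => ?_⟩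
  rw [trace_vecMulVec_self_mul_vecMulVec_self, ← hM, mul_apply']
  rfl

theorem psdRank_le_hadamard_sqrt_rank_general (p q : ℕ) (M N : Matrix (Fin p) (Fin q) ℝ)
    (hN : ∀ i j, (N i j) ^ 2 = M i j) (r : ℕ)
    (hr : N.rank = r) : psdRank M ≤ r := by
  obtain ⟨C, D, hCD⟩ := N.exists_rank_factorization
  subst hr
  exact psdRank_le_of_sq_mul_eq M C D (by rwa [hCD])

/-- If `N` is a Hadamard square root of `M` of rank `r`, then `psdRank M ≤ r`. -/
theorem psdRank_le_hadamard_sqrt_rank (p q : ℕ) (M N : Matrix (Fin p) (Fin q) ℝ)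
    (hM : ∀ i j, 0 ≤ M i j) (hN : ∀ i j, (N i j) ^ 2 = M i j) (r : ℕ)
    (hr : N.rank = r) : psdRank M ≤ r :=
  psdRank_le_hadamard_sqrt_rank_general p q M N hN r hr
end

section
/- For a nonnegative matrix M ∈ ℝ₊^{p×q}, the smallest k such that M admits a S₊^k-factorization in which every factor has rank one equals the minimum rank over all Hadamard square roots of M: min{rank(N) : N_{ij}² = M_{ij} for all i,j}. -/
/-!
Setting `N i j = ⟨a i, b j⟩` turns a rank-one factorization of size `k` into a Hadamard square
root `N = A Bᵀ` with inner dimension `k`, hence of rank at most `k`; conversely, a rank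
factorization `N = A B` of a Hadamard square root through `Fin (rank N)` gives a rank-one
factorization of size `rank N`.
-/

open Matrix

theorem Matrix.exists_mul_eq_of_rank {m n K : Type*} [Fintype m] [Fintype n] [DecidableEq n]
    [Field K] (N : Matrix m n K) :
    ∃ (A : Matrix m (Fin N.rank) K) (B : Matrix (Fin N.rank) n K), A * B = N := by
  let c : Module.Basis (Fin N.rank) K (LinearMap.range N.mulVecLin) :=
    Module.finBasisOfFinrankEq K _ rfl
  let f : (Fin N.rank → K) →ₗ[K] m → K :=
    (LinearMap.range N.mulVecLin).subtype ∘ₗ c.equivFun.symm.toLinearMap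
  let g : (n → K) →ₗ[K] Fin N.rank → K := c.equivFun.toLinearMap ∘ₗ N.mulVecLin.rangeRestrict
  have hfg : f ∘ₗ g = Matrix.toLin' N := LinearMap.ext fun v => by simp [f, g]
  refine ⟨LinearMap.toMatrix' f, LinearMap.toMatrix' g, ?_⟩
  rw [← LinearMap.toMatrix'_comp, hfg, LinearMap.toMatrix'_toLin']

theorem rank_one_factorization_eq_sqrt_rank_general (p q : ℕ) (M : Matrix (Fin p) (Fin q) ℝ) :
    sInf {k : ℕ | ∃ (a : Fin p → Fin k → ℝ) (b : Fin q → Fin k → ℝ),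
        ∀ i j, (∑ l, a i l * b j l) ^ 2 = M i j} =
      sInf {r : ℕ | ∃ N : Matrix (Fin p) (Fin q) ℝ,
        (∀ i j, (N i j) ^ 2 = M i j) ∧ N.rank = r} := by
  apply csInf_eq_csInf_of_forall_exists_le
  · rintro k ⟨a, b, hab⟩
    refine ⟨_, ⟨of a * (of b)ᵀ, hab, rfl⟩, ?_⟩
    calc (of a * (of b)ᵀ).rank ≤ (of a).rank := rank_mul_le_left _ _
      _ ≤ k := rank_le_width _
  · rintro _ ⟨N, hN, rfl⟩
    obtain ⟨A, B, hAB⟩ := N.exists_mul_eq_of_rank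
    exact ⟨_, ⟨A, Bᵀ, fun i j => by rw [← hN, ← congrFun₂ hAB i j]; rfl⟩, le_rfl⟩

/-- The smallest size of a psd factorization of `M` using only rank-one factors (i.e.
`M i j = ⟨a i, b j⟩²`) equals the minimum rank of a Hadamard square root of `M`. -/
theorem rank_one_factorization_eq_sqrt_rank (p q : ℕ) (M : Matrix (Fin p) (Fin q) ℝ)
    (hM : ∀ i j, 0 ≤ M i j) :
    sInf {k : ℕ | ∃ (a : Fin p → Fin k → ℝ) (b : Fin q → Fin k → ℝ),
        ∀ i j, (∑ l, a i l * b j l) ^ 2 = M i j} =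
      sInf {r : ℕ | ∃ N : Matrix (Fin p) (Fin q) ℝ,
        (∀ i j, (N i j) ^ 2 = M i j) ∧ N.rank = r} :=
  rank_one_factorization_eq_sqrt_rank_general p q M
end

section
/- There is no vector u ∈ ℝ^t with all coordinates nonzero such that a fixed trinomial of the form u^a + u^b + u^c or u^a − u^b + u^c (a,b,c ∈ ℕ^t distinct monomial exponents) vanishes at both u and at the coordinatewise square (u₁²,...,u_t²). More precisely: if D(x) = x^a − x^b + x^c with a,b,c distinct, then there is no u ∈ (ℝ\{0})^t with D(u) = 0 and D(u₁²,...,u_t²) = 0. -/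
/-!
If `x^b = x^a + x^c` at `u`, squaring gives `(u^b)² = (u^a)² + 2 u^{a+c} + (u^c)²`, so vanishing at
the coordinatewise square `u²`, where each monomial takes the square of its value at `u`, would
force `u^a u^c = 0`; this is impossible when no coordinate of `u` vanishes.
-/

theorem Finset.prod_pow_pow_eq_pow_prod {ι M : Type*} [CommMonoid M] (s : Finset ι)
    (u : ι → M) (e : ι → ℕ) (n : ℕ) :
    ∏ i ∈ s, (u i ^ n) ^ e i = (∏ i ∈ s, u i ^ e i) ^ n := by
  rw [← Finset.prod_pow]
  exact Finset.prod_congr rfl fun i _ => pow_right_comm _ _ _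

theorem mul_eq_zero_of_sub_add_eq_zero_of_sq {R : Type*} [CommRing R] [NoZeroDivisors R]
    (h2 : (2 : R) ≠ 0) {A B C : R} (h : A - B + C = 0) (hsq : A ^ 2 - B ^ 2 + C ^ 2 = 0) :
    A * C = 0 := by
  have hB : B = A + C := by linear_combination -h
  have : 2 * (A * C) = 0 := by linear_combination -hsq - (B + A + C) * hB
  exact (mul_eq_zero.1 this).resolve_left h2

theorem trinomial_obstruction_general (t : ℕ) (a b c : Fin t → ℕ)
    (u : Fin t → ℝ) (hu : ∀ i, u i ≠ 0) :
    ¬ ((∏ i, u i ^ a i) - (∏ i, u i ^ b i) + (∏ i, u i ^ c i) = 0 ∧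
        (∏ i, (u i ^ 2) ^ a i) - (∏ i, (u i ^ 2) ^ b i) + (∏ i, (u i ^ 2) ^ c i) = 0) := by
  rintro ⟨h, hsq⟩
  simp only [Finset.prod_pow_pow_eq_pow_prod] at hsq
  have hmon : ∀ e : Fin t → ℕ, ∏ i, u i ^ e i ≠ 0 := fun e =>
    Finset.prod_ne_zero_iff.2 fun i _ => pow_ne_zero _ (hu i)
  exact mul_ne_zero (hmon a) (hmon c) (mul_eq_zero_of_sub_add_eq_zero_of_sq two_ne_zero h hsq)

/-- Trinomial obstruction: a trinomial `x^a − x^b + x^c` with distinct exponent vectors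
cannot vanish both at a point `u` with all coordinates nonzero and at the coordinatewise
square of `u`. -/
theorem trinomial_obstruction (t : ℕ) (a b c : Fin t → ℕ)
    (hab : a ≠ b) (hbc : b ≠ c) (hac : a ≠ c)
    (u : Fin t → ℝ) (hu : ∀ i, u i ≠ 0) :
    ¬ ((∏ i, u i ^ a i) - (∏ i, u i ^ b i) + (∏ i, u i ^ c i) = 0 ∧
        (∏ i, (u i ^ 2) ^ a i) - (∏ i, (u i ^ 2) ^ b i) + (∏ i, (u i ^ 2) ^ c i) = 0) :=
  trinomial_obstruction_general t a b c u hu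
end

section
/- Let C ⊂ ℝ^n be a compact convex set containing the origin in its interior. If there exist maps A from the extreme points of C to S₊^k and B from the extreme points of the polar C° to S₊^k such that trace(A(x)B(y)) = 1 − ⟨x,y⟩ for all extreme points x of C and y of C°, then k(k+3)/2 ≥ n, i.e. k = Ω(√n). -/
open Matrix RealInnerProductSpace

/-!
The slack functions `y ↦ 1 - ⟪x, y⟫`, for `x` an extreme point of `C`, restricted to the
extreme points `Y` of `C°`, span an `(n + 1)`-dimensional space: the extreme points of a convex
body affinely span the whole space (Krein–Milman), so `(t, v) ↦ (y ↦ t - ⟪v, y⟫)` is injective on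
`ℝ × ℝⁿ` and its image is spanned by the slack functions. A psd factorization writes each slack
function as `y ↦ trace (A x * B y)` with `A x` symmetric, so this space lies in the image of the
`k (k + 1) / 2`-dimensional space of symmetric matrices under `M ↦ (y ↦ trace (M * B y))`.
-/

theorem Submodule.eq_top_of_forall_one_prod_mem {k V : Type*} [Field k] [AddCommGroup V]
    [Module k V] {S : Set V} (hS : affineSpan k S = ⊤) {U : Submodule k (k × V)}
    (hU : ∀ s ∈ S, ((1 : k), s) ∈ U) : U = ⊤ := by
  have hall : ∀ v : V, ((1 : k), v) ∈ U := by
    have hle : affineSpan k S ≤ (U : AffineSubspace k (k × V)).comap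
        ((AffineMap.const k V (1 : k)).prod (AffineMap.id k V)) :=
      affineSpan_le.mpr hU
    intro v
    simpa using hle (hS.symm ▸ AffineSubspace.mem_top k V v)
  refine eq_top_iff.mpr fun ⟨t, v⟩ _ => ?_
  have hp : ((t, v) : k × V) = t • ((1 : k), (0 : V)) + (((1 : k), v) - ((1 : k), 0)) := by
    ext <;> simp
  rw [hp]
  exact U.add_mem (U.smul_mem t (hall 0)) (U.sub_mem (hall v) (hall 0))

theorem affineSpan_extremePoints_eq_top {E : Type*} [NormedAddCommGroup E] [NormedSpace ℝ E]
    [FiniteDimensional ℝ E] {C : Set E} (hcomp : IsCompact C) (hconv : Convex ℝ C)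
    (hint : (interior C).Nonempty) : affineSpan ℝ (Set.extremePoints ℝ C) = ⊤ := by
  rw [hconv.interior_nonempty_iff_affineSpan_eq_top] at hint
  refine top_unique (hint ▸ affineSpan_le.mpr ?_)
  calc C = closure (convexHull ℝ (Set.extremePoints ℝ C)) :=
        (closure_convexHull_extremePoints hcomp hconv).symm
    _ ⊆ closure (affineSpan ℝ (Set.extremePoints ℝ C)) :=
        closure_mono (convexHull_subset_affineSpan _)
    _ = affineSpan ℝ (Set.extremePoints ℝ C) :=
        (AffineSubspace.closed_of_finiteDimensional _).closure_eq

section InnerPolar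

variable {E : Type*} [NormedAddCommGroup E] [InnerProductSpace ℝ E]

/-- The polar `C°` of the paper; unlike `LinearMap.polar` it bounds `⟪x, y⟫`, not `|⟪x, y⟫|`. -/
def innerPolar (C : Set E) : Set E := {y | ∀ x ∈ C, ⟪x, y⟫ ≤ 1}

theorem convex_innerPolar (C : Set E) : Convex ℝ (innerPolar C) := by
  simp only [innerPolar, Set.ofPred_forall]
  exact convex_iInter₂ fun x _ => convex_halfSpace_le (innerₛₗ ℝ x).isLinear 1

theorem isClosed_innerPolar (C : Set E) : IsClosed (innerPolar C) := by
  simp only [innerPolar, Set.ofPred_forall]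
  exact isClosed_biInter fun x _ =>
    isClosed_le (continuous_const.inner continuous_id) continuous_const

theorem innerPolar_subset_closedBall {C : Set E} {r : ℝ} (hr : 0 < r)
    (hC : Metric.closedBall 0 r ⊆ C) : innerPolar C ⊆ Metric.closedBall 0 r⁻¹ := by
  intro y hy
  rw [mem_closedBall_zero_iff, ← one_div, le_div_iff₀ hr]
  rcases eq_or_ne y 0 with rfl | hy0
  · simp
  have hx : (r / ‖y‖) • y ∈ C := hC <| by
    rw [mem_closedBall_zero_iff, norm_smul, Real.norm_of_nonneg (by positivity),
      div_mul_cancel₀ _ (norm_ne_zero_iff.mpr hy0)]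
  have := hy _ hx
  rw [real_inner_smul_left, real_inner_self_eq_norm_sq, div_mul_eq_mul_div, pow_two,
    ← mul_assoc, mul_div_cancel_right₀ _ (norm_ne_zero_iff.mpr hy0)] at this
  linarith

theorem closedBall_subset_innerPolar {C : Set E} {R : ℝ} (hR : 0 < R)
    (hC : C ⊆ Metric.closedBall 0 R) : Metric.closedBall 0 R⁻¹ ⊆ innerPolar C := by
  intro y hy x hx
  have hx := mem_closedBall_zero_iff.mp (hC hx)
  rw [mem_closedBall_zero_iff] at hy
  calc ⟪x, y⟫ ≤ ‖x‖ * ‖y‖ := real_inner_le_norm x y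
    _ ≤ R * R⁻¹ := mul_le_mul hx hy (norm_nonneg y) hR.le
    _ = 1 := mul_inv_cancel₀ hR.ne'

theorem isCompact_innerPolar [FiniteDimensional ℝ E] {C : Set E} (h0 : (0 : E) ∈ interior C) :
    IsCompact (innerPolar C) := by
  obtain ⟨r, hr, hball⟩ :=
    Metric.nhds_basis_closedBall.mem_iff.mp (mem_interior_iff_mem_nhds.mp h0)
  exact Metric.isCompact_of_isClosed_isBounded (isClosed_innerPolar C)
    (Metric.isBounded_closedBall.subset (innerPolar_subset_closedBall hr hball))

theorem zero_mem_interior_innerPolar {C : Set E} (hC : Bornology.IsBounded C) :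
    (0 : E) ∈ interior (innerPolar C) := by
  obtain ⟨R, hR, hCR⟩ := hC.subset_closedBall_lt 0 0
  exact interior_mono (closedBall_subset_innerPolar hR hCR)
    (mem_interior_iff_mem_nhds.mpr (Metric.closedBall_mem_nhds 0 (inv_pos.mpr hR)))

end InnerPolar

namespace Matrix

variable {m R : Type*} [CommSemiring R]

def ofSym2 : (Sym2 m → R) →ₗ[R] Matrix m m R where
  toFun c := of fun i j => c s(i, j)
  map_add' _ _ := rfl
  map_smul' _ _ := rfl

theorem IsSymm.mem_range_ofSym2 {M : Matrix m m R} (hM : M.IsSymm) :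
    M ∈ LinearMap.range (ofSym2 (R := R)) :=
  ⟨Sym2.lift ⟨M, fun i j => hM.apply j i⟩, by ext i j; rfl⟩

variable [Fintype m] {ι : Type*}

def traceMap (B : ι → Matrix m m R) : Matrix m m R →ₗ[R] (ι → R) :=
  LinearMap.pi fun i => traceLinearMap m R R ∘ₗ LinearMap.mulRight R (B i)

@[simp]
theorem traceMap_apply (B : ι → Matrix m m R) (M : Matrix m m R) (i : ι) :
    traceMap B M i = (M * B i).trace := rfl

end Matrix

section Slack

variable {E : Type*} [NormedAddCommGroup E] [InnerProductSpace ℝ E]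

noncomputable def slackMap (Y : Set E) : (ℝ × E) →ₗ[ℝ] (Y → ℝ) :=
  LinearMap.pi fun y => LinearMap.fst ℝ ℝ E - innerₛₗ ℝ (y : E) ∘ₗ LinearMap.snd ℝ ℝ E

@[simp]
theorem slackMap_apply (Y : Set E) (p : ℝ × E) (y : Y) :
    slackMap Y p y = p.1 - ⟪p.2, y⟫ := by
  simp [slackMap, real_inner_comm]

theorem slackMap_injective {Y : Set E} (hY : affineSpan ℝ Y = ⊤) :
    Function.Injective (slackMap Y) := by
  rw [← LinearMap.ker_eq_bot, eq_bot_iff]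
  rintro ⟨t, v⟩ hp
  have hvanish : (LinearMap.fst ℝ ℝ E).smulRight t - innerₛₗ ℝ v ∘ₗ LinearMap.snd ℝ ℝ E = 0 := by
    rw [← LinearMap.ker_eq_top]
    refine Submodule.eq_top_of_forall_one_prod_mem hY fun y hy => ?_
    simpa using congrFun hp ⟨y, hy⟩
  have ht : t = 0 := by simpa using LinearMap.congr_fun hvanish ((1 : ℝ), (0 : E))
  have hv : v = 0 := by simpa using LinearMap.congr_fun hvanish ((0 : ℝ), v)
  simp [ht, hv]

variable [FiniteDimensional ℝ E] {m : Type*} [Fintype m]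

theorem finrank_add_one_le_of_trace_factorization {X Y : Set E}
    (hX : affineSpan ℝ X = ⊤) (hY : affineSpan ℝ Y = ⊤) (A B : E → Matrix m m ℝ)
    (hA : ∀ x ∈ X, (A x).IsSymm)
    (hfact : ∀ x ∈ X, ∀ y ∈ Y, (A x * B y).trace = 1 - ⟪x, y⟫) :
    Module.finrank ℝ E + 1 ≤ (Fintype.card m + 1).choose 2 := by
  set F := traceMap (fun y : Y => B y) ∘ₗ ofSym2
  have hrange : LinearMap.range (slackMap Y) ≤ LinearMap.range F := by
    rw [LinearMap.range_le_iff_comap]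
    refine Submodule.eq_top_of_forall_one_prod_mem hX fun x hx => ?_
    obtain ⟨c, hc⟩ := (hA x hx).mem_range_ofSym2
    refine ⟨c, funext fun y => ?_⟩
    simp [F, hc, hfact x hx y y.2]
  calc Module.finrank ℝ E + 1 = Module.finrank ℝ (LinearMap.range (slackMap Y)) := by
        rw [LinearMap.finrank_range_of_inj (slackMap_injective hY), Module.finrank_prod,
          Module.finrank_self, add_comm]
    _ ≤ Module.finrank ℝ (LinearMap.range F) := Submodule.finrank_mono hrange
    _ ≤ Module.finrank ℝ (Sym2 m → ℝ) := LinearMap.finrank_range_le F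
    _ = (Fintype.card m + 1).choose 2 := by
        rw [Module.finrank_fintype_fun_eq_card, Sym2.card]

end Slack

theorem psd_factorization_lower_bound_general (n k : ℕ)
    (C : Set (EuclideanSpace ℝ (Fin n)))
    (hconv : Convex ℝ C) (hcomp : IsCompact C) (h0 : (0 : EuclideanSpace ℝ (Fin n)) ∈ interior C)
    (A B : EuclideanSpace ℝ (Fin n) → Matrix (Fin k) (Fin k) ℝ)
    (hA : ∀ x ∈ Set.extremePoints ℝ C, (A x).PosSemidef)
    (hfact : ∀ x ∈ Set.extremePoints ℝ C,
      ∀ y ∈ Set.extremePoints ℝ {y : EuclideanSpace ℝ (Fin n) | ∀ x ∈ C, ⟪x, y⟫ ≤ 1},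
        (A x * B y).trace = 1 - ⟪x, y⟫) :
    n ≤ k * (k + 3) / 2 := by
  have hX := affineSpan_extremePoints_eq_top hcomp hconv ⟨0, h0⟩
  have hY := affineSpan_extremePoints_eq_top (isCompact_innerPolar h0) (convex_innerPolar C)
    ⟨0, zero_mem_interior_innerPolar hcomp.isBounded⟩
  have hbound := finrank_add_one_le_of_trace_factorization hX hY A B
    (fun x hx => isHermitian_iff_isSymm.mp (hA x hx).isHermitian) hfact
  rw [finrank_euclideanSpace_fin, Fintype.card_fin, Nat.choose_two_right,
    Nat.add_sub_cancel] at hbound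
  have hmono : (k + 1) * k / 2 ≤ k * (k + 3) / 2 := Nat.div_le_div_right (by nlinarith)
  omega

/-- If the slack operator of an `n`-dimensional convex body `C` (compact, with `0` in its
interior) admits a psd factorization of size `k` through maps `A, B` on the extreme points
of `C` and of its polar `C°`, then `k(k+3)/2 ≥ n`; i.e. `rank_psd(C) = Ω(√n)`. -/
theorem psd_factorization_lower_bound (n k : ℕ)
    (C : Set (EuclideanSpace ℝ (Fin n)))
    (hconv : Convex ℝ C) (hcomp : IsCompact C) (h0 : (0 : EuclideanSpace ℝ (Fin n)) ∈ interior C)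
    (A B : EuclideanSpace ℝ (Fin n) → Matrix (Fin k) (Fin k) ℝ)
    (hA : ∀ x ∈ Set.extremePoints ℝ C, (A x).PosSemidef)
    (hB : ∀ y ∈ Set.extremePoints ℝ {y : EuclideanSpace ℝ (Fin n) | ∀ x ∈ C, ⟪x, y⟫ ≤ 1},
      (B y).PosSemidef)
    (hfact : ∀ x ∈ Set.extremePoints ℝ C,
      ∀ y ∈ Set.extremePoints ℝ {y : EuclideanSpace ℝ (Fin n) | ∀ x ∈ C, ⟪x, y⟫ ≤ 1},
        (A x * B y).trace = 1 - ⟪x, y⟫) :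
    n ≤ k * (k + 3) / 2 :=
  psd_factorization_lower_bound_general n k C hconv hcomp h0 A B hA hfact
end
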